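/- arXiv:0811.2958 — 2 statements merged into one kernel-verified Lean document; each statement's English description precedes it below -/
import Mathlib

section
/- For every real number α there exists a sequence a_1, a_2, … with a_n ∈ {1, −1} for all n such that the series ∑_{n=1}^∞ a_n/n converges and ∑_{n=1}^∞ a_n/n = α. -/
/-!
Choose the signs greedily: add the next term `t n` when the current partial sum is at most `α`,
subtract it otherwise. With `e n = |S n - α|`, one step gives `e (n+1) ≤ max (e n - t n) (t n)`.
Once `t n ≤ ε`, the error therefore decreases by `t n` as long as it exceeds `ε`, and never
leaves `[0, ε]` after entering it. Since `∑ t n` diverges, the error cannot stay above `ε`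
forever; since `t n → 0`, every `ε > 0` is eventually allowed.
-/

open Filter Topology Finset

section ErrorDecay

variable {e t : ℕ → ℝ} {ε : ℝ}

theorem frequently_le_of_le_max_sub
    (ht : Tendsto (fun n => ∑ i ∈ range n, t i) atTop atTop)
    (he : ∀ᶠ n in atTop, e (n + 1) ≤ max (e n - t n) ε) :
    ∃ᶠ n in atTop, e n ≤ ε := by
  by_contra! habove
  obtain ⟨M, hM⟩ := eventually_atTop.1 (he.and habove)
  have hdecr : ∀ n, M ≤ n → e n + ∑ i ∈ range n, t i ≤ e M + ∑ i ∈ range M, t i := by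
    intro n hn
    induction n, hn using Nat.le_induction with
    | base => rfl
    | succ n hn ih =>
      have hstep : e (n + 1) ≤ e n - t n :=
        ((le_max_iff.1 (hM n hn).1).resolve_right (hM (n + 1) (by omega)).2.not_ge)
      rw [sum_range_succ]
      linarith
  obtain ⟨n, hlarge, hn⟩ :=
    ((ht.eventually_gt_atTop (e M + ∑ i ∈ range M, t i - ε)).and (eventually_ge_atTop M)).exists
  linarith [hdecr n hn, (hM n hn).2]

theorem eventually_le_of_le_max_sub (ht0 : ∀ n, 0 ≤ t n)
    (ht : Tendsto (fun n => ∑ i ∈ range n, t i) atTop atTop)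
    (he : ∀ᶠ n in atTop, e (n + 1) ≤ max (e n - t n) ε) :
    ∀ᶠ n in atTop, e n ≤ ε := by
  obtain ⟨N, hN⟩ := eventually_atTop.1 he
  obtain ⟨m, hm, hem⟩ := (frequently_atTop.1 (frequently_le_of_le_max_sub ht he)) N
  refine eventually_atTop.2 ⟨m, fun n hn => ?_⟩
  induction n, hn using Nat.le_induction with
  | base => exact hem
  | succ n hn ih =>
    exact (hN n (hm.trans hn)).trans (max_le (by linarith [ht0 n]) le_rfl)

end ErrorDecay

section Greedy

variable (t : ℕ → ℝ) (α : ℝ)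

noncomputable def greedySignedSum : ℕ → ℝ
  | 0 => 0
  | n + 1 => greedySignedSum n + (if greedySignedSum n ≤ α then t n else -t n)

noncomputable def greedySign (n : ℕ) : ℝ :=
  if greedySignedSum t α n ≤ α then 1 else -1

theorem greedySign_eq_one_or_neg_one (n : ℕ) : greedySign t α n = 1 ∨ greedySign t α n = -1 := by
  unfold greedySign
  split_ifs <;> simp

theorem greedySignedSum_eq_sum (n : ℕ) :
    greedySignedSum t α n = ∑ k ∈ range n, greedySign t α k * t k := by
  induction n with
  | zero => rfl
  | succ n ih =>
    rw [sum_range_succ, ← ih, greedySignedSum, greedySign]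
    split_ifs <;> ring

theorem abs_greedySignedSum_succ_sub_le (n : ℕ) :
    |greedySignedSum t α (n + 1) - α| ≤ max (|greedySignedSum t α n - α| - t n) (t n) := by
  rw [greedySignedSum, le_max_iff]
  split_ifs with h
  · rw [abs_of_nonpos (sub_nonpos.2 h)]
    rcases abs_cases (greedySignedSum t α n + t n - α) with ⟨h₁, _⟩ | ⟨h₁, _⟩ <;>
      [right; left] <;> linarith
  · rw [abs_of_pos (sub_pos.2 (not_le.1 h))]
    rcases abs_cases (greedySignedSum t α n + -t n - α) with ⟨h₁, _⟩ | ⟨h₁, _⟩ <;>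
      [left; right] <;> linarith

theorem tendsto_greedySignedSum (ht0 : ∀ n, 0 ≤ t n) (ht : Tendsto t atTop (𝓝 0))
    (hdiv : Tendsto (fun n => ∑ i ∈ range n, t i) atTop atTop) :
    Tendsto (greedySignedSum t α) atTop (𝓝 α) := by
  rw [Metric.tendsto_nhds]
  intro ε hε
  have hsmall : ∀ᶠ n in atTop, t n ≤ ε / 2 :=
    ht.eventually (ge_mem_nhds (half_pos hε))
  have hstep : ∀ᶠ n in atTop, |greedySignedSum t α (n + 1) - α| ≤
      max (|greedySignedSum t α n - α| - t n) (ε / 2) :=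
    hsmall.mono fun n hn =>
      (abs_greedySignedSum_succ_sub_le t α n).trans (max_le_max le_rfl hn)
  filter_upwards [eventually_le_of_le_max_sub (e := fun n => |greedySignedSum t α n - α|)
    ht0 hdiv hstep] with n hn
  rw [Real.dist_eq]
  linarith

end Greedy

/-- For every real number `α` there is a choice of signs `a n ∈ {1, -1}` such that the
series `∑_{n=1}^∞ a n / n` converges (in the sense of its partial sums) to `α`. -/
theorem signed_harmonic_realises_every_real (α : ℝ) :
    ∃ a : ℕ → ℝ, (∀ n : ℕ, 1 ≤ n → a n = 1 ∨ a n = -1) ∧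
      Tendsto (fun N : ℕ => ∑ n ∈ Finset.Icc 1 N, a n / (n : ℝ)) atTop (𝓝 α) := by
  set t : ℕ → ℝ := fun k => 1 / ((k : ℝ) + 1)
  refine ⟨fun n => greedySign t α (n - 1), fun n _ => greedySign_eq_one_or_neg_one t α _, ?_⟩
  have hpartial : ∀ N : ℕ, ∑ n ∈ Icc 1 N, greedySign t α (n - 1) / (n : ℝ) =
      greedySignedSum t α N := by
    intro N
    rw [greedySignedSum_eq_sum, ← Finset.Ico_add_one_right_eq_Icc, sum_Ico_eq_sum_range]
    refine sum_congr (by simp) fun k _ => ?_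
    simp only [t, Nat.add_sub_cancel_left]
    push_cast
    ring
  simp only [hpartial]
  exact tendsto_greedySignedSum t α (fun k => by positivity)
    tendsto_one_div_add_atTop_nhds_zero_nat Real.tendsto_sum_range_one_div_nat_succ_atTop
end

section
/- The dyadic cobweb framework G_∞ is infinitesimally flexible: it possesses a proper infinitesimal flex, i.e. an infinitesimal flex u = (u_1, u_2, …) that does not belong to the three-dimensional space of infinitesimal flexes arising from isometric motions of ℝ². Consequently, since G_∞ is continuously rigid, an infinite framework may be continuously rigid without being infinitesimally rigid. -/
noncomputable section

open Set
open scoped InnerProductSpace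

/-- Points of the Euclidean plane. -/
abbrev Pt : Type := EuclideanSpace ℝ (Fin 2)

/-- The point of the Euclidean plane with coordinates `(a, b)`. -/
def pt (a b : ℝ) : Pt := (WithLp.equiv 2 (Fin 2 → ℝ)).symm ![a, b]

/-- Rotation of the plane by a right angle, `(x, y) ↦ (-y, x)`: the velocity field of the
infinitesimal rotation about the origin. -/
def rot (q : Pt) : Pt := pt (-(q 1)) (q 0)

/-- The four corners `(1,1), (1,-1), (-1,-1), (-1,1)` of the unit square, in cyclic order. -/
def corner : Fin 4 → Pt := ![pt 1 1, pt 1 (-1), pt (-1) (-1), pt (-1) 1]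

/-- The abstract graph of the (one-way infinite) cobweb framework: vertices `(k, m)` with
`k ∈ ℕ` and `m ∈ Fin 4`; for each `k` the four square edges `(k,m)–(k,m+1)` (cyclically),
and the connecting edges `(k,m)–(k+1,m)` between corresponding corners of consecutive
squares. -/
def cobwebGraph : SimpleGraph (ℕ × Fin 4) :=
  SimpleGraph.fromRel (fun a b =>
    (a.1 = b.1 ∧ b.2 = a.2 + 1) ∨ (a.2 = b.2 ∧ b.1 = a.1 + 1))

/-- The framework points of the dyadic cobweb framework `G_∞`: the corner `m` of the
square of scale `2⁻ᵏ`. -/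
def cob (v : ℕ × Fin 4) : Pt := ((2 : ℝ) ^ v.1)⁻¹ • corner v.2

/-! Rotate the outer square about the origin and keep every other vertex fixed.
The edges of the outer square are preserved by the rotation, the inner edges do not move, and
each connecting edge from the outer square is radial, so the rotation moves its outer end
orthogonally to it. A rigid motion vanishing at two distinct inner vertices is zero, while this
flex does not vanish on the outer square. -/

section InfinitesimalFlex

variable {V E : Type*} [NormedAddCommGroup E] [InnerProductSpace ℝ E]

def IsInfinitesimalFlex (G : SimpleGraph V) (p u : V → E) : Prop :=
  ∀ a b, G.Adj a b → ⟪p a - p b, u a - u b⟫_ℝ = 0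

theorem isInfinitesimalFlex_fromRel {r : V → V → Prop} {p u : V → E}
    (h : ∀ a b, r a b → ⟪p a - p b, u a - u b⟫_ℝ = 0) :
    IsInfinitesimalFlex (SimpleGraph.fromRel r) p u := by
  rintro a b ⟨-, hab | hba⟩
  · exact h a b hab
  · rw [← neg_sub (p b), ← neg_sub (u b), inner_neg_neg]
    exact h b a hba

end InfinitesimalFlex

theorem rot_sub (x y : Pt) : rot (x - y) = rot x - rot y := by
  ext i; fin_cases i <;> simp [rot, pt, neg_add_eq_sub]

theorem inner_self_rot (x : Pt) : ⟪x, rot x⟫_ℝ = 0 := by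
  simp [rot, pt, PiLp.inner_apply, Fin.sum_univ_two, mul_comm]

theorem rot_eq_zero_iff {x : Pt} : rot x = 0 ↔ x = 0 := by
  constructor
  · intro h
    ext i
    fin_cases i
    · simpa [rot, pt] using congrArg (· 1) h
    · simpa [rot, pt] using congrArg (· 0) h
  · rintro rfl
    ext i; fin_cases i <;> simp [rot, pt]

theorem inner_sub_rot_sub (x y : Pt) : ⟪x - y, rot x - rot y⟫_ℝ = 0 := by
  rw [← rot_sub, inner_self_rot]

theorem inner_sub_smul_rot (c : ℝ) (x : Pt) : ⟪x - c • x, rot x⟫_ℝ = 0 := by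
  have : x - c • x = (1 - c) • x := by rw [sub_smul, one_smul]
  rw [this, real_inner_smul_left, inner_self_rot, mul_zero]

theorem rigidMotion_eq_zero_of_two_zeros {c p q : Pt} {ρ : ℝ} (hpq : p ≠ q)
    (hp : c + ρ • rot p = 0) (hq : c + ρ • rot q = 0) : ρ = 0 ∧ c = 0 := by
  have hρ : ρ = 0 := by
    have : ρ • rot (p - q) = 0 := by
      rw [rot_sub, smul_sub, ← add_sub_add_left_eq_sub _ _ c, hp, hq, sub_zero]
    simpa [rot_eq_zero_iff, sub_eq_zero, hpq] using this
  subst hρ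
  simpa using hp

theorem cob_succ (k : ℕ) (m : Fin 4) : cob (k + 1, m) = (2 : ℝ)⁻¹ • cob (k, m) := by
  simp [cob, pow_succ, smul_smul, mul_comm]

theorem cob_ne_zero (v : ℕ × Fin 4) : cob v ≠ 0 := by
  have hcorner : corner v.2 ≠ 0 := by
    intro h
    have := congrArg (· 0) h
    obtain ⟨k, m⟩ := v
    fin_cases m <;> simp [corner, pt] at this
  exact smul_ne_zero (by positivity) hcorner

def outerRotation (v : ℕ × Fin 4) : Pt := if v.1 = 0 then rot (cob v) else 0

theorem isInfinitesimalFlex_outerRotation :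
    IsInfinitesimalFlex cobwebGraph cob outerRotation := by
  apply isInfinitesimalFlex_fromRel
  rintro ⟨k, m⟩ ⟨k', m'⟩ (⟨rfl, rfl⟩ | ⟨rfl, rfl⟩)
  · rcases k with _ | k
    · exact inner_sub_rot_sub _ _
    · simp [outerRotation]
  · rcases k with _ | k
    · simp only [outerRotation, cob_succ, zero_add, one_ne_zero, ↓reduceIte, sub_zero]
      exact inner_sub_smul_rot _ _
    · simp [outerRotation]

/-- The dyadic cobweb framework `G_∞` is infinitesimally flexible: it has a proper
infinitesimal flex, i.e. a sequence `u` of vectors with `⟪p_i - p_j, u_i - u_j⟫ = 0` for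
every edge, which is not the restriction to the framework points of the velocity field
of a rigid motion of the plane (a translation field plus a multiple of the rotation
field, which form the three-dimensional space of trivial infinitesimal flexes). -/
theorem cobweb_infinitesimally_flexible :
    ∃ u : ℕ × Fin 4 → Pt,
      (∀ a b, cobwebGraph.Adj a b → ⟪cob a - cob b, u a - u b⟫_ℝ = 0) ∧
      ¬ ∃ (c : Pt) (ρ : ℝ), ∀ a, u a = c + ρ • rot (cob a) := by
  refine ⟨outerRotation, isInfinitesimalFlex_outerRotation, ?_⟩
  rintro ⟨c, ρ, h⟩
  have hcob : cob (1, 0) ≠ cob (2, 0) := by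
    intro h12
    have := congrArg (· 0) h12
    norm_num [cob, corner, pt] at this
  obtain ⟨rfl, rfl⟩ := rigidMotion_eq_zero_of_two_zeros hcob (h (1, 0)).symm (h (2, 0)).symm
  have h0 := h (0, 0)
  simp [outerRotation, rot_eq_zero_iff, cob_ne_zero] at h0
end
end
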